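/- arXiv:1703.03962 — 2 statements merged into one kernel-verified Lean document; each statement's English description precedes it below -/
import Mathlib

section
/- Let (R, m) be a local commutative ring, S a commutative ring, f : R → S a ring homomorphism, and J a proper ideal of S with J ⊆ Jac(S). Assume f maps every regular element of R to a regular element of S. If the amalgamation R ⋈^f J is a Prüfer ring, then R is a Prüfer ring and J = f(r)·J for every regular element r of R. -/
open Pointwise

/-- The amalgamation `R ⋈^f J` of `R` with `S` along the ideal `J` with respect to
`f : R →+* S`, as a subring of `R × S`. -/
def amalgamation {R S : Type*} [CommRing R] [CommRing S] (f : R →+* S) (J : Ideal S) :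
    Subring (R × S) where
  carrier := {p | ∃ j ∈ J, p.2 = f p.1 + j}
  zero_mem' := ⟨0, J.zero_mem, by simp⟩
  one_mem' := ⟨0, J.zero_mem, by simp⟩
  add_mem' := by
    rintro ⟨a, a'⟩ ⟨b, b'⟩ ⟨j, hj, h1⟩ ⟨k, hk, h2⟩
    exact ⟨j + k, J.add_mem hj hk, by simp_all; ring⟩
  neg_mem' := by
    rintro ⟨a, a'⟩ ⟨j, hj, h1⟩
    exact ⟨-j, J.neg_mem hj, by simp_all; ring⟩
  mul_mem' := by
    rintro ⟨a, a'⟩ ⟨b, b'⟩ ⟨j, hj, h1⟩ ⟨k, hk, h2⟩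
    refine ⟨f a * k + j * f b + j * k, ?_, by simp_all; ring⟩
    exact J.add_mem (J.add_mem (J.mul_mem_left _ hk) (J.mul_mem_right _ hj))
      (J.mul_mem_right _ hj)

/-- The set of zero-divisors of a commutative ring `A`. -/
def zdivSet (A : Type*) [CommRing A] : Set A := {a | ∃ b, b ≠ 0 ∧ a * b = 0}

/-- A commutative ring is a Prüfer ring if every nonzero finitely generated regular ideal
is projective (equivalently, invertible). -/
def IsPruferRing (A : Type*) [CommRing A] : Prop :=
  ∀ I : Ideal A, I ≠ ⊥ → I.FG → (∃ r ∈ I, r ∈ nonZeroDivisors A) → Module.Projective A I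

/-!
Since `J ⊆ Jac(S)`, an element `(a, s)` of `A := R ⋈^f J` is a unit as soon as `a` is, so `A` is
local. Over a local ring a finitely generated projective module is free, and a free ideal has rank
at most one; hence in the local Prüfer ring `A` every finitely generated regular ideal is principal,
generated by a regular element. `R` is a retract of `A` (via `r ↦ (r, f r)` and the first
projection) and principality passes to the retract. For `j ∈ J` the ideal generated by `(r, f r)`
and `(r, f r + j)` is principal, so in the local ring `A` one of them divides the other; comparing
first coordinates with `r` regular, the cofactor has the form `(1, 1 + k)` with `k ∈ J`, a unit,
and `j = f r * k`.
-/

open scoped nonZeroDivisors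

lemma mem_nonZeroDivisors_of_dvd {A : Type*} [CommMonoidWithZero A] {a r : A} (h : a ∣ r)
    (hr : r ∈ A⁰) : a ∈ A⁰ := by
  obtain ⟨c, rfl⟩ := h
  exact (mul_mem_nonZeroDivisors.mp hr).1

lemma Prod.mk_mem_nonZeroDivisors {R S : Type*} [CommMonoidWithZero R] [CommMonoidWithZero S]
    {r : R} {s : S} (hr : r ∈ R⁰) (hs : s ∈ S⁰) : (r, s) ∈ (R × S)⁰ :=
  mem_nonZeroDivisors_iff_right.mpr fun _ hx =>
    Prod.ext (mem_nonZeroDivisors_iff_right.mp hr _ congr(($hx).1))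
      (mem_nonZeroDivisors_iff_right.mp hs _ congr(($hx).2))

lemma Ideal.span_singleton_projective {A : Type*} [CommRing A] {a : A} (ha : a ∈ A⁰) :
    Module.Projective A (Ideal.span {a}) := by
  have hinj : Function.Injective (LinearMap.toSpanSingleton A A a) := by
    rw [← LinearMap.ker_eq_bot, LinearMap.ker_toSpanSingleton_eq_bot_iff]
    exact ha.2
  exact .of_equiv ((LinearEquiv.ofInjective _ hinj).trans
    (LinearEquiv.ofEq _ _ (LinearMap.span_singleton_eq_range A A a).symm))

theorem IsLocalRing.dvd_or_dvd_of_span_pair_eq_span_singleton {A : Type*} [CommRing A]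
    [IsLocalRing A] {a b x : A} (h : Ideal.span {a, b} = Ideal.span {x}) : a ∣ b ∨ b ∣ a := by
  have hx : x ∈ Ideal.span {a, b} := h ▸ Ideal.mem_span_singleton_self x
  obtain ⟨α, β, hαβ⟩ := Ideal.mem_span_pair.mp hx
  obtain ⟨γ, rfl⟩ : x ∣ a := Ideal.mem_span_singleton.mp (h ▸ Ideal.subset_span (by simp))
  obtain ⟨δ, rfl⟩ : x ∣ b := Ideal.mem_span_singleton.mp (h ▸ Ideal.subset_span (by simp))
  have hsum : (1 - (α * γ + β * δ)) * x = 0 := by linear_combination -hαβ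
  rcases IsLocalRing.isUnit_or_isUnit_one_sub_self (α * γ + β * δ) with hu | hu
  · rcases IsLocalRing.isUnit_or_isUnit_of_isUnit_add hu with hγ | hδ
    · exact .inl ((isUnit_of_mul_isUnit_right hγ).mul_right_dvd.mpr (dvd_mul_right x δ))
    · exact .inr ((isUnit_of_mul_isUnit_right hδ).mul_right_dvd.mpr (dvd_mul_right x γ))
  · simp [hu.mul_right_eq_zero.mp hsum]

namespace IsPruferRing

variable {A : Type*} [CommRing A]

theorem exists_eq_span_singleton [IsLocalRing A] (hA : IsPruferRing A) {I : Ideal A}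
    (hI : I.FG) {r : A} (hrI : r ∈ I) (hr : r ∈ A⁰) : ∃ a ∈ A⁰, I = Ideal.span {a} := by
  have hne : I ≠ ⊥ := fun h => nonZeroDivisors.ne_zero hr (by simpa [h] using hrI)
  have := hA I hne hI ⟨r, hrI, hr⟩
  have := Module.Finite.iff_fg.mpr hI
  have : Module.Free A I := Module.free_of_flat_of_isLocalRing
  have hrank : Module.rank A I ≤ 1 := (Submodule.rank_le I).trans_eq (CommSemiring.rank_self A)
  obtain ⟨a, rfl⟩ := (I.rank_le_one_iff_isPrincipal.mp hrank).principal
  exact ⟨a, mem_nonZeroDivisors_of_dvd (Ideal.mem_span_singleton.mp hrI) hr, rfl⟩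

theorem of_leftInverse {B : Type*} [CommRing B] [IsLocalRing B] (hB : IsPruferRing B)
    (i : A →+* B) (p : B →+* A) (hpi : Function.LeftInverse p i) (hi : ∀ r ∈ A⁰, i r ∈ B⁰) :
    IsPruferRing A := by
  rintro I - hI ⟨r, hrI, hr⟩
  obtain ⟨x, -, hx⟩ :=
    hB.exists_eq_span_singleton (hI.map i) (Ideal.mem_map_of_mem i hrI) (hi r hr)
  have hIx : I = Ideal.span {p x} := by
    rw [← Set.image_singleton, ← Ideal.map_span, ← hx, Ideal.map_map,
      show p.comp i = RingHom.id A from RingHom.ext hpi, Ideal.map_id]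
  rw [hIx] at hrI ⊢
  exact Ideal.span_singleton_projective
    (mem_nonZeroDivisors_of_dvd (Ideal.mem_span_singleton.mp hrI) hr)

end IsPruferRing

namespace amalgamation

variable {R S : Type*} [CommRing R] [CommRing S] (f : R →+* S) (J : Ideal S)

theorem mem_iff {p : R × S} : p ∈ amalgamation f J ↔ p.2 - f p.1 ∈ J :=
  ⟨fun ⟨j, hj, h⟩ => by simpa [h] using hj, fun h => ⟨_, h, by ring⟩⟩

def incl : R →+* amalgamation f J :=
  (RingHom.prod (RingHom.id R) f).codRestrict _ fun r => (mem_iff f J).mpr (by simp)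

def fst : amalgamation f J →+* R :=
  (RingHom.fst R S).comp (amalgamation f J).subtype

theorem fst_incl : Function.LeftInverse (fst f J) (incl f J) := fun _ => rfl

theorem incl_mem_nonZeroDivisors {r : R} (hr : r ∈ R⁰) (hfr : f r ∈ S⁰) :
    incl f J r ∈ (amalgamation f J)⁰ :=
  mem_nonZeroDivisors_of_injective Subtype.val_injective (f := (amalgamation f J).subtype)
    (Prod.mk_mem_nonZeroDivisors hr hfr)

variable {f J}

theorem isUnit_of_isUnit_fst (hJ : J ≤ Ideal.jacobson ⊥) {x : amalgamation f J}
    (hx : IsUnit (fst f J x)) : IsUnit x := by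
  obtain ⟨⟨a, s⟩, hxJ⟩ := x
  change IsUnit a at hx
  rw [mem_iff] at hxJ
  have hs : IsUnit s := by
    have := isLocalHom_of_le_jacobson_bot J hJ
    refine isUnit_of_map_unit (Ideal.Quotient.mk J) s ?_
    rw [← sub_add_cancel s (f a), map_add, Ideal.Quotient.eq_zero_iff_mem.mpr hxJ, zero_add]
    exact (hx.map f).map _
  have ha : f a * f ↑hx.unit⁻¹ = 1 := by rw [← map_mul, hx.mul_val_inv, map_one]
  have hmem : ↑hs.unit⁻¹ - f ↑hx.unit⁻¹ ∈ J := by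
    rw [show ↑hs.unit⁻¹ - f ↑hx.unit⁻¹ = -(↑hs.unit⁻¹ * f ↑hx.unit⁻¹) * (s - f a) by
      linear_combination (-(↑hs.unit⁻¹ : S)) * ha + f ↑hx.unit⁻¹ * hs.mul_val_inv]
    exact J.mul_mem_left _ hxJ
  exact .of_mul_eq_one ⟨(↑hx.unit⁻¹, ↑hs.unit⁻¹), (mem_iff f J).mpr hmem⟩
    (Subtype.ext (Prod.ext hx.mul_val_inv hs.mul_val_inv))

theorem isLocalRing [IsLocalRing R] (hJ : J ≤ Ideal.jacobson ⊥) :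
    IsLocalRing (amalgamation f J) :=
  have : IsLocalHom (fst f J) := ⟨fun _ => isUnit_of_isUnit_fst hJ⟩
  (fst f J).domain_isLocalRing

theorem fst_eq_one_of_mul_eq {r : R} (hr : r ∈ R⁰) {y z t : amalgamation f J}
    (hy : fst f J y = r) (hz : fst f J z = r) (h : z = y * t) : fst f J t = 1 := by
  have h₁ := congr_arg (fst f J) h
  rw [map_mul, hy, hz] at h₁
  exact (mul_cancel_left_mem_nonZeroDivisors hr).mp (h₁.symm.trans (mul_one r).symm)

theorem incl_dvd_of_dvd_incl (hJ : J ≤ Ideal.jacobson ⊥) {r : R} (hr : r ∈ R⁰)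
    {x : amalgamation f J} (hx : fst f J x = r) (h : x ∣ incl f J r) : incl f J r ∣ x := by
  obtain ⟨t, ht⟩ := h
  have ht₁ := fst_eq_one_of_mul_eq hr hx rfl ht
  have hu : IsUnit t := isUnit_of_isUnit_fst hJ (ht₁ ▸ isUnit_one)
  exact hu.dvd_mul_right.mp (ht ▸ dvd_rfl)

theorem snd_sub_mem_smul_of_incl_dvd {r : R} (hr : r ∈ R⁰) {x : amalgamation f J}
    (hx : fst f J x = r) (h : incl f J r ∣ x) : (x : R × S).2 - f r ∈ f r • J := by
  obtain ⟨t, ht⟩ := h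
  have ht₁ : (t : R × S).1 = 1 := fst_eq_one_of_mul_eq hr rfl hx ht
  have ht₂ : (x : R × S).2 = f r * (t : R × S).2 :=
    congr_arg (fun y : amalgamation f J => (y : R × S).2) ht
  have hk := (mem_iff f J).mp t.2
  rw [ht₁, map_one] at hk
  rw [ht₂, ← mul_sub_one]
  exact Submodule.smul_mem_pointwise_smul _ _ _ hk

end amalgamation

theorem stmt7_general {R S : Type*} [CommRing R] [CommRing S] [IsLocalRing R]
    (f : R →+* S) (J : Ideal S) (hJjac : J ≤ Ideal.jacobson (⊥ : Ideal S))
    (hreg : ∀ r ∈ nonZeroDivisors R, f r ∈ nonZeroDivisors S)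
    (hP : IsPruferRing (amalgamation f J)) :
    IsPruferRing R ∧ ∀ r ∈ nonZeroDivisors R, f r • J = J := by
  have := amalgamation.isLocalRing (f := f) hJjac
  have hincl : ∀ r ∈ R⁰, amalgamation.incl f J r ∈ (amalgamation f J)⁰ :=
    fun r hr => amalgamation.incl_mem_nonZeroDivisors f J hr (hreg r hr)
  refine ⟨hP.of_leftInverse _ _ (amalgamation.fst_incl f J) hincl, fun r hr => ?_⟩
  refine le_antisymm (Submodule.smul_le_self_of_tower _ _) fun j hj => ?_
  let x : amalgamation f J := ⟨(r, f r + j), (amalgamation.mem_iff f J).mpr (by simpa using hj)⟩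
  have hx : amalgamation.fst f J x = r := rfl
  obtain ⟨a, -, ha⟩ :=
    hP.exists_eq_span_singleton (I := Ideal.span {amalgamation.incl f J r, x})
      (Submodule.fg_span (by simp)) (Ideal.subset_span (by simp)) (hincl r hr)
  have hdvd : amalgamation.incl f J r ∣ x :=
    (IsLocalRing.dvd_or_dvd_of_span_pair_eq_span_singleton ha).elim id
      (amalgamation.incl_dvd_of_dvd_incl hJjac hr hx)
  simpa [x] using amalgamation.snd_sub_mem_smul_of_incl_dvd hr hx hdvd

theorem stmt7 {R S : Type*} [CommRing R] [CommRing S] [IsLocalRing R]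
    (f : R →+* S) (J : Ideal S) (hJ : J ≠ ⊤) (hJjac : J ≤ Ideal.jacobson (⊥ : Ideal S))
    (hreg : ∀ r ∈ nonZeroDivisors R, f r ∈ nonZeroDivisors S)
    (hP : IsPruferRing (amalgamation f J)) :
    IsPruferRing R ∧ ∀ r ∈ nonZeroDivisors R, f r • J = J :=
  stmt7_general f J hJjac hreg hP
end

section
/- Let A ⊆ B be an extension of integral domains and let K be the quotient field of A. Then the trivial extension A ⋉ B is a Prüfer ring if and only if A is a Prüfer domain and K ⊆ B (equivalently, every nonzero element of A is invertible in B). -/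
open Pointwise

/-!
Write `R = A ⋉ B` and `ε = (0, 1) ∈ R`. If `R` is Prüfer and `a ≠ 0`, the ideal `J = (a, ε)` of
`R` is projective. Every functional `φ` on `J` satisfies `a · φ(ε) = ε · φ(a) ∈ 0 ⋉ B`, so
`φ(ε) ∈ 0 ⋉ B`, and the dual basis of `J` gives `ε ∈ (0 ⋉ B) · J ⊆ a R`, i.e. `1 ∈ a B`. For an
ideal `I` of `A` with a regular element, `IR` is a regular ideal of `R` and `I` is its retract
along `fst : R → A`, so `I` is projective.

Conversely, if every `a ≠ 0` is a unit of `B`, a regular ideal `J` of `R` contains `0 ⋉ B`, so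
`J = I ⋉ B` with `I = fst J` projective over `A`. For `a ∈ I` nonzero, an `A`-linear `ψ : I → A` is
multiplication by `q = ψ(a)/a ∈ B`, so `(x, b) ↦ (ψ x, q b)` is an `R`-linear functional on `J`,
and a finite dual basis of `I` lifts to one of `J`.
-/

open TrivSqZeroExt Ideal
open scoped nonZeroDivisors

local notation "tsze" => TrivSqZeroExt

theorem Module.Projective.of_semilinear_retract {R S P N : Type*} [Semiring R] [Semiring S]
    {σ : R →+* S} {τ : S →+* R} (hστ : ∀ c, σ (τ c) = c)
    [AddCommMonoid P] [Module R P] [Module.Projective R P] [AddCommMonoid N] [Module S N]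
    (p : P →ₛₗ[σ] N) (i : N →ₛₗ[τ] P) (hpi : ∀ n, p (i n) = n) : Module.Projective S N := by
  obtain ⟨s, hs⟩ := ‹Module.Projective R P›
  let j : N →ₗ[S] P →₀ S :=
    { toFun n := (s (i n)).mapRange σ σ.map_zero
      map_add' _ _ := by ext; simp
      map_smul' c n := by ext; simp [hστ] }
  refine .of_split j (Finsupp.linearCombination S fun x => p x) (LinearMap.ext fun n => ?_)
  calc Finsupp.linearCombination S (fun x => p x) (j n)
        = p (Finsupp.linearCombination R id (s (i n))) := by
          simp [j, Finsupp.linearCombination_apply, Finsupp.sum_mapRange_index, map_finsuppSum]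
    _ = n := by rw [hs, hpi]

theorem Module.Projective.of_dualBasis {R P ι : Type*} [Semiring R] [AddCommMonoid P] [Module R P]
    [Fintype ι] (x : ι → P) (φ : ι → P →ₗ[R] R) (h : ∀ p, ∑ i, φ i p • x i = p) :
    Module.Projective R P :=
  .of_split (LinearMap.pi φ) (Fintype.linearCombination R x) (LinearMap.ext h)

theorem Module.Projective.exists_dualBasis (R P : Type*) [Semiring R] [AddCommMonoid P]
    [Module R P] [Module.Finite R P] [Module.Projective R P] :
    ∃ (n : ℕ) (x : Fin n → P) (φ : Fin n → P →ₗ[R] R), ∀ p, ∑ i, φ i p • x i = p := by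
  obtain ⟨n, f, g, -, -, hfg⟩ := Module.Finite.exists_comp_eq_id_of_projective R P
  refine ⟨n, fun i => f fun j => if i = j then 1 else 0, fun i => LinearMap.proj i ∘ₗ g,
    fun p => ?_⟩
  conv_rhs => rw [← LinearMap.id_apply (R := R) p, ← hfg, LinearMap.comp_apply,
    LinearMap.pi_apply_eq_sum_univ]
  rfl

theorem Ideal.coe_mul_apply_comm {R : Type*} [CommRing R] {I : Ideal R} (φ : I →ₗ[R] R)
    (x y : I) : (x : R) * φ y = y * φ x := by
  rw [← smul_eq_mul, ← map_smul, ← smul_eq_mul, ← map_smul]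
  congr 1
  exact Subtype.ext (mul_comm _ _)

theorem Ideal.mem_mul_of_forall_apply_mem {R : Type*} [CommRing R] {I N : Ideal R}
    [Module.Projective R I] {x : I} (hx : ∀ φ : I →ₗ[R] R, φ x ∈ N) : (x : R) ∈ N * I := by
  obtain ⟨s, hs⟩ := ‹Module.Projective R I›
  rw [← hs x, Finsupp.linearCombination_apply, Finsupp.sum, Submodule.coe_sum]
  exact Submodule.sum_mem _ fun y _ => mul_mem_mul (hx (Finsupp.lapply y ∘ₗ s)) y.2

theorem Ideal.algebraMap_apply_eq_mul {A B : Type*} [CommRing A] [CommRing B] [Algebra A B]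
    {I : Ideal A} (ψ : I →ₗ[A] A) {a : A} (ha : a ∈ I) {u : B}
    (hu : algebraMap A B a * u = 1) (x : I) :
    algebraMap A B (ψ x) = algebraMap A B x * (algebraMap A B (ψ ⟨a, ha⟩) * u) := by
  have := congrArg (algebraMap A B) (coe_mul_apply_comm ψ x ⟨a, ha⟩)
  rw [map_mul, map_mul] at this
  calc algebraMap A B (ψ x) = algebraMap A B a * algebraMap A B (ψ x) * u := by
        rw [mul_right_comm, hu, one_mul]
    _ = _ := by rw [← this, mul_assoc]

namespace TrivSqZeroExt

section Module

variable {R M : Type*} [CommRing R] [AddCommGroup M] [Module R M] [Module Rᵐᵒᵖ M]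
  [IsCentralScalar R M]

theorem inl_mem_nonZeroDivisors [Module.IsTorsionFree R M] {r : R} (hr : r ∈ R⁰) :
    (inl r : tsze R M) ∈ (tsze R M)⁰ := by
  refine mem_nonZeroDivisors_iff_right.mpr fun x hx => ?_
  have hfst : x.fst * r = 0 := congrArg fst hx
  have hsnd : r • x.snd = 0 := by simpa using congrArg snd hx
  exact TrivSqZeroExt.ext ((mem_nonZeroDivisors_iff_right.mp hr) _ hfst)
    ((isRegular_iff_mem_nonZeroDivisors.mpr hr).smul_eq_zero_iff_right.mp hsnd)

theorem fst_ne_zero_of_mem_nonZeroDivisors [Nontrivial M] {z : tsze R M}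
    (hz : z ∈ (tsze R M)⁰) : z.fst ≠ 0 := by
  intro h
  obtain ⟨m, hm⟩ := exists_ne (0 : M)
  have : inr m * z = 0 := by ext <;> simp [h]
  exact hm (by simpa using congrArg snd (mem_nonZeroDivisors_iff_right.mp hz _ this))

theorem inr_mem_of_smul_eq {J : Ideal (tsze R M)} {z : tsze R M} (hz : z ∈ J) {m m' : M}
    (hm : z.fst • m' = m) : inr m ∈ J := by
  have : inr m' * z = inr m := by ext <;> simp [hm]
  exact this ▸ J.mul_mem_left _ hz

theorem eq_comap_fst_map_fst {J : Ideal (tsze R M)} (hJ : ∀ m, inr m ∈ J) :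
    J = (J.map (fstHom R R M)).comap (fstHom R R M) := by
  refine le_antisymm le_comap_map fun z hz => ?_
  obtain ⟨w, hw, hwz⟩ := (mem_map_iff_of_surjective _ (fun r => ⟨inl r, rfl⟩)).mp hz
  simp only [fstHom_apply] at hwz
  have : z = w + inr (z.snd - w.snd) := by ext <;> simp [hwz]
  exact this ▸ add_mem hw (hJ _)

theorem _root_.IsPruferRing.of_trivSqZeroExt [Module.IsTorsionFree R M]
    (hP : IsPruferRing (tsze R M)) : IsPruferRing R := by
  rintro I hI hIfg ⟨r, hrI, hr⟩
  let J := I.map (inlHom R M)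
  have hrJ : inl r ∈ J := mem_map_of_mem _ hrI
  have hJ : J ≠ ⊥ := by
    rwa [Ne, map_eq_bot_iff_of_injective (inl_injective (M := M))]
  have := hP J hJ (hIfg.map _) ⟨_, hrJ, inl_mem_nonZeroDivisors hr⟩
  have hJI : J ≤ I.comap (fstHom R R M) := map_le_iff_le_comap.mpr le_rfl
  exact .of_semilinear_retract (σ := (fstHom R R M).toRingHom) (τ := inlHom R M) (fun _ => rfl)
    { toFun (v : J) := ⟨v.1.fst, hJI v.2⟩
      map_add' _ _ := rfl
      map_smul' _ _ := rfl }
    { toFun (x : I) := ⟨inl x, mem_map_of_mem _ x.2⟩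
      map_add' x y := Subtype.ext (inl_add M (x : R) y)
      map_smul' c x := Subtype.ext (inl_mul M c (x : R)) }
    (fun _ => rfl)

theorem exists_smul_eq_of_isPruferRing [IsDomain R] [Module.IsTorsionFree R M]
    (hP : IsPruferRing (tsze R M)) {a : R} (ha : a ≠ 0) (m : M) : ∃ m', a • m' = m := by
  let J : Ideal (tsze R M) := span {inl a, inr m}
  have haJ : inl a ∈ J := subset_span (by simp)
  have hmJ : inr m ∈ J := subset_span (by simp)
  have hJ : J ≠ ⊥ := (Submodule.ne_bot_iff _).mpr ⟨_, haJ, fun h => ha (congrArg fst h)⟩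
  have := hP J hJ (Submodule.fg_span (Set.toFinite _))
    ⟨_, haJ, inl_mem_nonZeroDivisors (mem_nonZeroDivisors_of_ne_zero ha)⟩
  -- `a * (φ (inr m)).fst` is the first coordinate of `inr m * φ (inl a)`, hence zero.
  have hker : ∀ φ : J →ₗ[tsze R M] tsze R M, φ ⟨inr m, hmJ⟩ ∈ kerIdeal R M := by
    intro φ
    have := congrArg fst (coe_mul_apply_comm φ ⟨inl a, haJ⟩ ⟨inr m, hmJ⟩)
    simpa [kerIdeal, ha] using this
  have hle : kerIdeal R M * J ≤ span {inl a} := by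
    refine mul_le.mpr fun k hk j hj => ?_
    obtain ⟨x, y, rfl⟩ := mem_span_pair.mp hj
    have hkm : k * inr m = 0 := by
      rw [mem_kerIdeal_iff_inr] at hk
      rw [hk, inr_mul_inr]
    rw [mul_add, mul_left_comm k y, hkm, mul_zero, add_zero]
    exact mul_mem_left _ _ (mul_mem_left _ _ (mem_span_singleton_self _))
  obtain ⟨w, hw⟩ := mem_span_singleton'.mp (hle (mem_mul_of_forall_apply_mem hker))
  exact ⟨w.snd, by simpa using congrArg snd hw⟩

end Module

section Algebra

variable {A B : Type*} [CommRing A] [CommRing B] [Algebra A B] [Module Aᵐᵒᵖ B]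
  [IsCentralScalar A B]

def extendFunctional {I : Ideal A} (ψ : I →ₗ[A] A) (q : B)
    (hq : ∀ x : I, algebraMap A B (ψ x) = algebraMap A B x * q) :
    I.comap (fstHom A A B) →ₗ[tsze A B] tsze A B where
  toFun v := inl (ψ ⟨v.1.fst, v.2⟩) + inr (q * v.1.snd)
  map_add' v w := by
    ext
    · simp only [Submodule.coe_add, fst_add, fst_inl, fst_inr, add_zero]
      exact map_add ψ ⟨v.1.fst, v.2⟩ ⟨w.1.fst, w.2⟩
    · simp [mul_add]
  map_smul' r v := by
    ext
    · simp only [SetLike.val_smul, smul_eq_mul, fst_mul, fst_add, fst_inl, fst_inr, add_zero,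
        RingHom.id_apply]
      exact map_smul ψ r.fst ⟨v.1.fst, v.2⟩
    · simp only [SetLike.val_smul, smul_eq_mul, snd_mul, fst_mul, op_smul_eq_smul, snd_add,
        snd_inl, snd_inr, zero_add, RingHom.id_apply, fst_add, fst_inl, fst_inr, add_zero,
        Algebra.smul_def]
      linear_combination -r.snd * hq ⟨v.1.fst, v.2⟩

@[simp]
theorem fst_extendFunctional {I : Ideal A} (ψ : I →ₗ[A] A) (q : B) (hq) (v) :
    (extendFunctional ψ q hq v).fst = ψ ⟨v.1.fst, v.2⟩ := by
  simp [extendFunctional]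

@[simp]
theorem snd_extendFunctional {I : Ideal A} (ψ : I →ₗ[A] A) (q : B) (hq) (v) :
    (extendFunctional ψ q hq v).snd = q * v.1.snd := by
  simp [extendFunctional]

theorem projective_comap_fst {I : Ideal A} [Module.Finite A I] [Module.Projective A I]
    {a : A} (ha : a ∈ I) {u : B} (hu : algebraMap A B a * u = 1) :
    Module.Projective (tsze A B) (I.comap (fstHom A A B)) := by
  obtain ⟨n, y, φ, hy⟩ := Module.Projective.exists_dualBasis A I
  refine .of_dualBasis (fun i => ⟨inl (y i), (y i).2⟩)
    (fun i => extendFunctional (φ i) _ (algebraMap_apply_eq_mul _ ha hu)) fun v => Subtype.ext ?_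
  ext
  · simpa [fst_sum] using congrArg Subtype.val (hy ⟨_, v.2⟩)
  · have hya : ∑ i, φ i ⟨a, ha⟩ * (y i : A) = a := by
      simpa using congrArg Subtype.val (hy ⟨a, ha⟩)
    simp only [AddSubmonoidClass.coe_finsetSum, SetLike.val_smul, smul_eq_mul, snd_sum, snd_mul,
      fst_extendFunctional, snd_inl, Algebra.smul_def, mul_zero, fst_inl, snd_extendFunctional,
      op_smul_eq_smul, zero_add]
    calc _ = algebraMap A B (∑ i, φ i ⟨a, ha⟩ * y i) * u * v.1.snd := by
          simp only [map_sum, map_mul, Finset.sum_mul]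
          exact Finset.sum_congr rfl fun i _ => by ring
      _ = v.1.snd := by rw [hya, hu, one_mul]

theorem isPruferRing [IsDomain A] [Nontrivial B] (hA : IsPruferRing A)
    (hK : ∀ a : A, a ≠ 0 → ∃ b : B, algebraMap A B a * b = 1) : IsPruferRing (tsze A B) := by
  rintro J - hJfg ⟨z, hzJ, hz⟩
  have hz₀ := fst_ne_zero_of_mem_nonZeroDivisors hz
  obtain ⟨u, hu⟩ := hK _ hz₀
  have hinr (b : B) : inr b ∈ J :=
    inr_mem_of_smul_eq hzJ (m' := u * b) (by rw [Algebra.smul_def, ← mul_assoc, hu, one_mul])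
  let I := J.map (fstHom A A B)
  have hI : I.FG := hJfg.map (fstHom A A B : tsze A B →+* A)
  have hzI : z.fst ∈ I := mem_map_of_mem _ hzJ
  have := Module.Finite.iff_fg.mpr hI
  have := hA I ((Submodule.ne_bot_iff _).mpr ⟨_, hzI, hz₀⟩) hI
    ⟨_, hzI, mem_nonZeroDivisors_of_ne_zero hz₀⟩
  rw [eq_comap_fst_map_fst hinr]
  exact projective_comap_fst hzI hu

end Algebra

end TrivSqZeroExt

theorem stmt14 {A B : Type*} [CommRing A] [CommRing B] [IsDomain A] [IsDomain B]
    [Algebra A B] (hinj : Function.Injective (algebraMap A B))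
    [Module Aᵐᵒᵖ B] [IsCentralScalar A B] :
    IsPruferRing (TrivSqZeroExt A B) ↔
      (IsPruferRing A ∧ ∀ a : A, a ≠ 0 → ∃ b : B, algebraMap A B a * b = 1) := by
  have := Module.isTorsionFree_iff_algebraMap_injective.mpr hinj
  refine ⟨fun hP => ⟨IsPruferRing.of_trivSqZeroExt hP, fun a ha => ?_⟩,
    fun ⟨hA, hK⟩ => TrivSqZeroExt.isPruferRing hA hK⟩
  obtain ⟨b, hb⟩ := TrivSqZeroExt.exists_smul_eq_of_isPruferRing hP ha 1
  exact ⟨b, by rwa [← Algebra.smul_def]⟩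
end
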